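/- The intersection of a regular language with a shuffle of a regular language and the full language over a sub-alphabet is regular: if R and γ are regular over A, then R ∩ (γ ⧢ (List A)) is regular. -/

import Mathlib

/-!
Shuffling the words of `γ` with arbitrary words produces exactly the words having a word of `γ`
as a sublist. This upward closure is accepted by the automaton for `γ` made nondeterministic by
allowing it to ignore any input letter, hence it is regular, and regular languages are closed
under intersection.
-/

def shuffle {A : Type*} : List A → List A → Set (List A)
  | [], w => {w}
  | a :: w₁, [] => {a :: w₁}
  | a :: w₁, b :: w₂ =>
      (a :: ·) '' shuffle w₁ (b :: w₂) ∪ (b :: ·) '' shuffle (a :: w₁) w₂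
  termination_by w₁ w₂ => w₁.length + w₂.length

def lshuffle {A : Type*} (L₁ L₂ : Set (List A)) : Set (List A) :=
  { u | ∃ w₁ ∈ L₁, ∃ w₂ ∈ L₂, u ∈ shuffle w₁ w₂ }

section Shuffle

variable {α : Type*}

theorem shuffle_nil_right (w : List α) : shuffle w [] = {w} := by
  cases w <;> rw [shuffle]

theorem cons_mem_shuffle_cons_left {a : α} {w v u : List α} (h : u ∈ shuffle w v) :
    a :: u ∈ shuffle (a :: w) v := by
  cases v with
  | nil =>
    rw [shuffle_nil_right, Set.mem_singleton_iff] at h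
    rw [h, shuffle_nil_right]
    rfl
  | cons b v => rw [shuffle]; exact .inl ⟨u, h, rfl⟩

theorem cons_mem_shuffle_cons_right {b : α} {w v u : List α} (h : u ∈ shuffle w v) :
    b :: u ∈ shuffle w (b :: v) := by
  cases w with
  | nil =>
    rw [shuffle, Set.mem_singleton_iff] at h
    rw [h, shuffle]
    rfl
  | cons a w => rw [shuffle]; exact .inr ⟨u, h, rfl⟩

theorem List.Sublist.of_mem_shuffle : ∀ {w v u : List α}, u ∈ shuffle w v → w.Sublist u
  | [], _, u, _ => List.nil_sublist u
  | _ :: _, [], _, h => by rw [shuffle, Set.mem_singleton_iff] at h; rw [h]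
  | a :: w, b :: v, _, h => by
    rw [shuffle] at h
    rcases h with ⟨u, hu, rfl⟩ | ⟨u, hu, rfl⟩
    · exact (of_mem_shuffle hu).cons_cons a
    · exact (of_mem_shuffle hu).cons b
  termination_by w v => w.length + v.length

theorem List.Sublist.exists_mem_shuffle {w u : List α} (h : w.Sublist u) :
    ∃ v, u ∈ shuffle w v := by
  induction h with
  | slnil => exact ⟨[], by rw [shuffle_nil_right]; rfl⟩
  | cons a _ ih =>
    obtain ⟨v, hv⟩ := ih
    exact ⟨a :: v, cons_mem_shuffle_cons_right hv⟩
  | cons_cons a _ ih =>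
    obtain ⟨v, hv⟩ := ih
    exact ⟨v, cons_mem_shuffle_cons_left hv⟩

end Shuffle

def Language.upwardClosure {α : Type*} (L : Language α) : Language α :=
  {u | ∃ w ∈ L, w.Sublist u}

theorem lshuffle_univ_eq_upwardClosure {α : Type*} (L : Language α) :
    lshuffle (L : Set (List α)) Set.univ = L.upwardClosure := by
  ext u
  constructor
  · rintro ⟨w, hw, _, -, hu⟩
    exact ⟨w, hw, .of_mem_shuffle hu⟩
  · rintro ⟨w, hw, hwu⟩
    obtain ⟨v, hv⟩ := hwu.exists_mem_shuffle
    exact ⟨w, hw, v, trivial, hv⟩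

namespace DFA

variable {α σ : Type*}

@[simps]
def skipNFA (M : DFA α σ) : NFA α σ where
  step q a := {M.step q a, q}
  start := {M.start}
  accept := M.accept

theorem mem_skipNFA_evalFrom_iff (M : DFA α σ) {q q' : σ} {u : List α} :
    q' ∈ M.skipNFA.evalFrom {q} u ↔ ∃ w, w.Sublist u ∧ M.evalFrom q w = q' := by
  induction u generalizing q with
  | nil => simp [eq_comm]
  | cons a u ih =>
    rw [NFA.evalFrom_cons, NFA.stepSet_singleton, skipNFA_step, NFA.mem_evalFrom_iff_exists]
    simp only [Set.mem_insert_iff, Set.mem_singleton_iff, ih, List.sublist_cons_iff]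
    constructor
    · rintro ⟨t, rfl | rfl, w, hw, rfl⟩
      · exact ⟨a :: w, .inr ⟨w, rfl, hw⟩, rfl⟩
      · exact ⟨w, .inl hw, rfl⟩
    · rintro ⟨_, hw | ⟨w, rfl, hw⟩, rfl⟩
      · exact ⟨q, .inr rfl, _, hw, rfl⟩
      · exact ⟨M.step q a, .inl rfl, w, hw, rfl⟩

theorem skipNFA_accepts (M : DFA α σ) : M.skipNFA.accepts = M.accepts.upwardClosure := by
  ext u
  rw [NFA.mem_accepts, skipNFA_start]
  simp only [mem_skipNFA_evalFrom_iff, skipNFA_accept]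
  constructor
  · rintro ⟨_, hacc, w, hw, rfl⟩
    exact ⟨w, hacc, hw⟩
  · rintro ⟨w, hacc, hw⟩
    exact ⟨_, hacc, w, hw, rfl⟩

end DFA

theorem Language.IsRegular.upwardClosure {α : Type*} {L : Language α} (h : L.IsRegular) :
    L.upwardClosure.IsRegular := by
  obtain ⟨σ, _, M, rfl⟩ := h
  exact ⟨Set σ, inferInstance, M.skipNFA.toDFA, by rw [NFA.toDFA_correct, M.skipNFA_accepts]⟩

theorem inter_shuffle_univ_isRegular_general {A : Type*} (R γ : Language A)
    (hR : R.IsRegular) (hγ : γ.IsRegular) :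
    Language.IsRegular
      (((R : Set (List A)) ∩ lshuffle (γ : Set (List A)) Set.univ : Set (List A)) : Language A) := by
  rw [lshuffle_univ_eq_upwardClosure]
  exact hR.inf hγ.upwardClosure

theorem inter_shuffle_univ_isRegular {A : Type*} [Fintype A] (R γ : Language A)
    (hR : R.IsRegular) (hγ : γ.IsRegular) :
    Language.IsRegular
      (((R : Set (List A)) ∩ lshuffle (γ : Set (List A)) Set.univ : Set (List A)) : Language A) :=
  inter_shuffle_univ_isRegular_general R γ hR hγ
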